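/- arXiv:2402.07458 — 7 statements merged into one kernel-verified Lean document; each statement's English description precedes it below -/
import Mathlib

section
/- For any outcomes x ∈ {0,1}^T and predictions p ∈ [0,1]^T, the calibration distance CalDist(x,p) = min over q in C(x) of ‖p−q‖₁ is at most the expected calibration error ECE(x,p) = Σ_{α} |Σ_{t=1}^T (x_t − p_t)·1[p_t = α]|. -/
/-!
Recalibrate `p` by replacing each prediction with the empirical frequency of the outcomes on its
level set. The result is perfectly calibrated and lies in `[0, 1]`, and on the level set
`{t | p t = α}` it moves every prediction by the same amount `|α - mean|`, so the total movement
there is `#{t | p t = α} * |α - mean| = |∑_{p t = α} (x t - p t)|`, the `α`-term of the ECE.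
-/

open Finset

namespace Calibration

variable {ι β : Type*} [Fintype ι] [DecidableEq β]

noncomputable def levelMean (x : ι → ℝ) (p : ι → β) (b : β) : ℝ :=
  (∑ s with p s = b, x s) / #{s | p s = b}

theorem sum_sub_levelMean (x : ι → ℝ) (p : ι → β) (b : β) :
    ∑ s with p s = b, (x s - levelMean x p b) = 0 := by
  rcases eq_empty_or_nonempty {s | p s = b} with hempty | hne
  · simp only [hempty, sum_empty]
  · have hcard : (#{s | p s = b} : ℝ) ≠ 0 := by exact_mod_cast hne.card_pos.ne'
    rw [sum_sub_distrib, sum_const, nsmul_eq_mul, levelMean, mul_div_cancel₀ _ hcard, sub_self]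

theorem levelMean_mem_Icc {x : ι → ℝ} (hx : ∀ t, x t ∈ Set.Icc 0 1) (p : ι → β) (b : β) :
    levelMean x p b ∈ Set.Icc 0 1 := by
  have hsum_le : ∑ s with p s = b, x s ≤ #{s | p s = b} := by
    simpa using sum_le_sum fun s (_ : s ∈ ({s | p s = b} : Finset ι)) => (hx s).2
  exact ⟨div_nonneg (sum_nonneg fun s _ => (hx s).1) (Nat.cast_nonneg _),
    div_le_one_of_le₀ hsum_le (Nat.cast_nonneg _)⟩

theorem sum_fiberwise_image {M : Type*} [AddCommMonoid M] (p : ι → β) (f : ι → M) :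
    ∑ b ∈ image p univ, ∑ t with p t = b, f t = ∑ t, f t :=
  sum_fiberwise_of_maps_to (fun t _ => mem_image_of_mem p (mem_univ t)) f

theorem sum_mul_boole_eq_sum_filter {R : Type*} [NonAssocSemiring R] (p : ι → β) (f : ι → R)
    (b : β) : ∑ t, f t * (if p t = b then 1 else 0) = ∑ t with p t = b, f t := by
  simp only [mul_boole, sum_filter]

theorem levelMean_calibrated (x : ι → ℝ) (p : ι → β) (α : ℝ) :
    ∑ t, (x t - levelMean x p (p t)) * (if levelMean x p (p t) = α then 1 else 0) = 0 := by
  rw [← sum_fiberwise_image p]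
  refine sum_eq_zero fun b _ => ?_
  calc ∑ t with p t = b, (x t - levelMean x p (p t)) * (if levelMean x p (p t) = α then 1 else 0)
      = (∑ t with p t = b, (x t - levelMean x p b)) * (if levelMean x p b = α then 1 else 0) := by
        rw [sum_mul]
        exact sum_congr rfl fun t ht => by rw [(mem_filter.mp ht).2]
    _ = 0 := by rw [sum_sub_levelMean, zero_mul]

theorem sum_abs_sub_levelMean (x p : ι → ℝ) :
    ∑ t, |p t - levelMean x p (p t)| = ∑ b ∈ image p univ, |∑ t with p t = b, (x t - p t)| := by
  rw [← sum_fiberwise_image p]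
  refine sum_congr rfl fun b _ => ?_
  have hshift : ∑ t with p t = b, (x t - p t)
      = ∑ t with p t = b, (x t - levelMean x p b) + ∑ t with p t = b, (levelMean x p b - b) := by
    rw [← sum_add_distrib]
    exact sum_congr rfl fun t ht => by rw [(mem_filter.mp ht).2]; ring
  rw [hshift, sum_sub_levelMean, zero_add, sum_const, nsmul_eq_mul, abs_mul, Nat.abs_cast,
    ← nsmul_eq_mul, ← sum_const, abs_sub_comm]
  exact sum_congr rfl fun t ht => by rw [(mem_filter.mp ht).2]

end Calibration

open Calibration in
theorem calDist_le_ECE_general (T : ℕ) (x p : Fin T → ℝ)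
    (hx : ∀ t, x t = 0 ∨ x t = 1) :
    sInf {d : ℝ | ∃ q : Fin T → ℝ, (∀ t, q t ∈ Set.Icc (0:ℝ) 1) ∧
        (∀ α : ℝ, ∑ t, (x t - q t) * (if q t = α then 1 else 0) = 0) ∧
        d = ∑ t, |p t - q t|} ≤
      ∑ α ∈ Finset.image p Finset.univ,
        |∑ t, (x t - p t) * (if p t = α then 1 else 0)| := by
  have hx01 : ∀ t, x t ∈ Set.Icc (0:ℝ) 1 := fun t => by rcases hx t with h | h <;> simp [h]
  refine (csInf_le ⟨0, ?_⟩ (Set.mem_ofPred.mpr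
    ⟨fun t => levelMean x p (p t), fun t => levelMean_mem_Icc hx01 p (p t),
      levelMean_calibrated x p, rfl⟩)).trans_eq ?_
  · rintro _ ⟨q, -, -, rfl⟩
    exact sum_nonneg fun t _ => abs_nonneg _
  · simp only [sum_abs_sub_levelMean, sum_mul_boole_eq_sum_filter]

/-- The calibration distance is at most the ECE. -/
theorem calDist_le_ECE (T : ℕ) (x p : Fin T → ℝ)
    (hx : ∀ t, x t = 0 ∨ x t = 1) (hp : ∀ t, p t ∈ Set.Icc (0:ℝ) 1) :
    sInf {d : ℝ | ∃ q : Fin T → ℝ, (∀ t, q t ∈ Set.Icc (0:ℝ) 1) ∧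
        (∀ α : ℝ, ∑ t, (x t - q t) * (if q t = α then 1 else 0) = 0) ∧
        d = ∑ t, |p t - q t|} ≤
      ∑ α ∈ Finset.image p Finset.univ,
        |∑ t, (x t - p t) * (if p t = α then 1 else 0)| :=
  calDist_le_ECE_general T x p hx
end

section
/- The smooth calibration error satisfies smCE(x,p) ≤ |Σ_{t=1}^T (x_t − p_t)| + Σ_{α ∈ [0,1]} |α − 1/2| · |Δ_α|, where Δ_α = Σ_{t=1}^T (x_t − p_t)·1[p_t = α]. -/
lemma fiber_sum (T : ℕ) (p : Fin T → ℝ) (g : Fin T → ℝ) :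
    ∑ α ∈ Finset.image p Finset.univ, ∑ t, g t * (if p t = α then 1 else 0)
      = ∑ t, g t := by
  have h := Finset.sum_fiberwise_of_maps_to
    (g := p) (s := Finset.univ) (t := Finset.image p Finset.univ)
    (fun t _ => Finset.mem_image_of_mem p (Finset.mem_univ t)) g
  rw [← h]
  apply Finset.sum_congr rfl
  intro α _
  rw [Finset.sum_filter]
  apply Finset.sum_congr rfl
  intro t _
  by_cases h : p t = α <;> simp [h]

/-- smCE(x,p) ≤ |Σ (x_t − p_t)| + Σ_α |α − 1/2|·|Δ_α|. -/
theorem smCE_le_bias_bound (T : ℕ) (x p : Fin T → ℝ)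
    (hx : ∀ t, x t = 0 ∨ x t = 1) (hp : ∀ t, p t ∈ Set.Icc (0:ℝ) 1) :
    sSup {s : ℝ | ∃ f : ℝ → ℝ, LipschitzOnWith 1 f (Set.Icc (0:ℝ) 1) ∧
        (∀ a ∈ Set.Icc (0:ℝ) 1, f a ∈ Set.Icc (-1:ℝ) 1) ∧
        s = ∑ t, f (p t) * (x t - p t)} ≤
      |∑ t, (x t - p t)| +
        ∑ α ∈ Finset.image p Finset.univ,
          |α - 1/2| * |∑ t, (x t - p t) * (if p t = α then 1 else 0)| := by
  set Δ : ℝ → ℝ := fun α => ∑ t, (x t - p t) * (if p t = α then 1 else 0) with hΔ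
  apply Real.sSup_le
  · rintro s ⟨f, hf, hb, rfl⟩
    have h12 : (1/2 : ℝ) ∈ Set.Icc (0:ℝ) 1 := by norm_num
    have hf12 : |f (1/2)| ≤ 1 := abs_le.mpr (hb _ h12)
    -- regroup the sum by fibers
    have key : ∑ t, f (p t) * (x t - p t)
        = ∑ α ∈ Finset.image p Finset.univ, f α * Δ α := by
      have h1 : ∀ α ∈ Finset.image p Finset.univ,
          f α * Δ α = ∑ t, (f (p t) * (x t - p t)) * (if p t = α then 1 else 0) := by
        intro α _
        rw [hΔ, Finset.mul_sum]
        apply Finset.sum_congr rfl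
        intro t _
        by_cases h : p t = α <;> simp [h]
      rw [Finset.sum_congr rfl h1, fiber_sum T p (fun t => f (p t) * (x t - p t))]
    have hS : ∑ α ∈ Finset.image p Finset.univ, Δ α = ∑ t, (x t - p t) := by
      simpa [hΔ] using fiber_sum T p (fun t => x t - p t)
    rw [key]
    have split : ∑ α ∈ Finset.image p Finset.univ, f α * Δ α
        = f (1/2) * (∑ t, (x t - p t))
          + ∑ α ∈ Finset.image p Finset.univ, (f α - f (1/2)) * Δ α := by
      rw [← hS, Finset.mul_sum, ← Finset.sum_add_distrib]
      apply Finset.sum_congr rfl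
      intro α _
      ring
    rw [split]
    gcongr ?_ + ?_
    · calc f (1/2) * (∑ t, (x t - p t)) ≤ |f (1/2) * (∑ t, (x t - p t))| := le_abs_self _
        _ = |f (1/2)| * |∑ t, (x t - p t)| := abs_mul _ _
        _ ≤ 1 * |∑ t, (x t - p t)| := by
            exact mul_le_mul_of_nonneg_right hf12 (abs_nonneg _)
        _ = |∑ t, (x t - p t)| := one_mul _
    · calc ∑ α ∈ Finset.image p Finset.univ, (f α - f (1/2)) * Δ α
          ≤ ∑ α ∈ Finset.image p Finset.univ, |(f α - f (1/2)) * Δ α| :=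
            Finset.sum_le_sum fun α _ => le_abs_self _
        _ ≤ ∑ α ∈ Finset.image p Finset.univ, |α - 1/2| * |Δ α| := by
            apply Finset.sum_le_sum
            intro α hα
            rw [abs_mul]
            apply mul_le_mul_of_nonneg_right _ (abs_nonneg _)
            obtain ⟨t, -, rfl⟩ := Finset.mem_image.mp hα
            have := hf.dist_le_mul _ (hp t) _ h12
            simpa [Real.dist_eq] using this
  · positivity
end

section
/- Consider the stochastic process X₀ = 0 and X_t = X_{t−1} + x_t − (1/2 + ε·sgn(X_{t−1})), where x₁, x₂, … are i.i.d. Bernoulli(1/2) and ε ∈ (0, 1/2]. Then for every t ≥ 0 and Δ ≥ 0, P(|X_t| ≥ Δ) ≤ e^{1/2} · e^{−εΔ}. -/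
/-!
Write `f(Δ) = e^{1/2 - εΔ}`. For `Δ ≤ ε + 1/2` we have `εΔ ≤ 1/2`, so `f(Δ) ≥ 1` and there is
nothing to prove. For larger `Δ` the walk can only reach `|X_{t+1}| ≥ Δ` from `|X_t| ≥ Δ + ε - 1/2`
with the coin pushing outwards, or from `|X_t| ≥ Δ + ε + 1/2` with the coin pushing inwards; since
the coin is fair and independent of `X_t`, the tail `p_t(Δ) = P(|X_t| ≥ Δ)` satisfies
`p_{t+1}(Δ) ≤ (p_t(Δ + ε - 1/2) + p_t(Δ + ε + 1/2)) / 2`. The bound `f` is a supersolution of this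
recursion because `cosh (ε/2) ≤ e^{ε²}`, and induction on `t` concludes.
-/

open MeasureTheory ProbabilityTheory Real
open scoped ENNReal

lemma Real.measurable_sign : Measurable Real.sign := by
  unfold Real.sign
  exact Measurable.ite (measurableSet_lt measurable_id measurable_const) measurable_const
    (Measurable.ite (measurableSet_lt measurable_const measurable_id) measurable_const
      measurable_const)

lemma exp_neg_mul_shift_avg_le (ε Δ : ℝ) :
    (exp (-(ε * (Δ + ε - 1/2))) + exp (-(ε * (Δ + ε + 1/2)))) / 2 ≤ exp (-(ε * Δ)) := by
  have hcosh : (exp (ε/2) + exp (-(ε/2))) / 2 ≤ exp (ε ^ 2) := by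
    rw [← cosh_eq]
    exact (cosh_le_exp_half_sq _).trans (exp_le_exp.2 (by nlinarith [sq_nonneg ε]))
  have h₁ : exp (-(ε * (Δ + ε - 1/2))) = exp (-(ε * Δ) - ε ^ 2) * exp (ε/2) := by
    rw [← exp_add]; ring_nf
  have h₂ : exp (-(ε * (Δ + ε + 1/2))) = exp (-(ε * Δ) - ε ^ 2) * exp (-(ε/2)) := by
    rw [← exp_add]; ring_nf
  calc _ = exp (-(ε * Δ) - ε ^ 2) * ((exp (ε/2) + exp (-(ε/2))) / 2) := by rw [h₁, h₂]; ring
    _ ≤ exp (-(ε * Δ) - ε ^ 2) * exp (ε ^ 2) := by gcongr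
    _ = exp (-(ε * Δ)) := by rw [← exp_add]; ring_nf

theorem le_ofReal_exp_of_tail_recursion {ε : ℝ} (hε0 : 0 < ε) (hε1 : ε ≤ 1/2)
    (p : ℕ → ℝ → ℝ≥0∞)
    (hp_le_one : ∀ t Δ, p t Δ ≤ 1) (hp_zero : ∀ Δ, 0 < Δ → p 0 Δ = 0)
    (hp_succ : ∀ t Δ, ε + 1/2 < Δ →
      p (t + 1) Δ ≤ 1/2 * p t (Δ + ε - 1/2) + 1/2 * p t (Δ + ε + 1/2))
    (t : ℕ) (Δ : ℝ) :
    p t Δ ≤ ENNReal.ofReal (exp (1/2) * exp (-(ε * Δ))) := by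
  have hsmall : ∀ t Δ, Δ ≤ ε + 1/2 →
      p t Δ ≤ ENNReal.ofReal (exp (1/2) * exp (-(ε * Δ))) := by
    intro t Δ hΔε
    refine (hp_le_one t Δ).trans (ENNReal.one_le_ofReal.2 ?_)
    rw [← exp_add]
    exact one_le_exp (by nlinarith)
  induction t generalizing Δ with
  | zero =>
    rcases le_or_gt Δ (ε + 1/2) with hΔε | hΔε
    · exact hsmall 0 Δ hΔε
    rw [hp_zero Δ (by linarith)]
    exact zero_le
  | succ t ih =>
    rcases le_or_gt Δ (ε + 1/2) with hΔε | hΔε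
    · exact hsmall _ Δ hΔε
    have hhalves : ∀ a b : ℝ, 0 ≤ a → 0 ≤ b →
        1/2 * ENNReal.ofReal a + 1/2 * ENNReal.ofReal b = ENNReal.ofReal ((a + b) / 2) := by
      intro a b ha hb
      rw [← mul_add, ← ENNReal.ofReal_add ha hb, ENNReal.ofReal_div_of_pos two_pos,
        ENNReal.ofReal_ofNat, one_div, ENNReal.div_eq_inv_mul]
    calc p (t + 1) Δ ≤ 1/2 * p t (Δ + ε - 1/2) + 1/2 * p t (Δ + ε + 1/2) := hp_succ t Δ hΔε
      _ ≤ 1/2 * ENNReal.ofReal (exp (1/2) * exp (-(ε * (Δ + ε - 1/2))))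
          + 1/2 * ENNReal.ofReal (exp (1/2) * exp (-(ε * (Δ + ε + 1/2)))) := by
        gcongr <;> exact ih _
      _ = ENNReal.ofReal (exp (1/2) *
          ((exp (-(ε * (Δ + ε - 1/2))) + exp (-(ε * (Δ + ε + 1/2)))) / 2)) := by
        rw [hhalves _ _ (by positivity) (by positivity)]; ring_nf
      _ ≤ ENNReal.ofReal (exp (1/2) * exp (-(ε * Δ))) := by
        gcongr
        exact exp_neg_mul_shift_avg_le ε Δ

lemma abs_step_ge_cases {ε y b Δ : ℝ} (hε : 0 < ε) (hb : b = 0 ∨ b = 1) (hΔ : ε + 1/2 < Δ)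
    (h : Δ ≤ |y + b - 1/2 - ε * sign y|) :
    (Δ + ε - 1/2 ≤ y ∧ b = 1) ∨ (y ≤ -(Δ + ε - 1/2) ∧ b = 0) ∨
      (Δ + ε + 1/2 ≤ y ∧ b = 0) ∨ (y ≤ -(Δ + ε + 1/2) ∧ b = 1) := by
  rcases lt_trichotomy y 0 with hy | rfl | hy
  · rw [sign_of_neg hy] at h
    rcases hb with rfl | rfl <;> rcases le_abs'.mp h with h | h <;> norm_num <;>
      first | linarith | (left; linarith) | (right; linarith)
  · rw [sign_zero] at h
    rcases hb with rfl | rfl <;> norm_num [abs_of_pos, abs_of_neg] at h <;> linarith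
  · rw [sign_of_pos hy] at h
    rcases hb with rfl | rfl <;> rcases le_abs'.mp h with h | h <;> norm_num <;>
      first | linarith | (left; linarith) | (right; linarith)

lemma controlledWalk_measurable_iSup {Ω : Type*} {x X : ℕ → Ω → ℝ} {ε : ℝ}
    (hX0 : ∀ ω, X 0 ω = 0)
    (hXrec : ∀ t ω, X (t + 1) ω = X t ω + x (t + 1) ω - 1/2 - ε * sign (X t ω)) (t : ℕ) :
    Measurable[⨆ i ∈ Set.Iic t, MeasurableSpace.comap (x i) inferInstance] (X t) := by
  induction t with
  | zero =>
    rw [show X 0 = fun _ => 0 from funext hX0]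
    exact measurable_const
  | succ t ih =>
    rw [show X (t + 1) = _ from funext (hXrec t)]
    have hmono : (⨆ i ∈ Set.Iic t, MeasurableSpace.comap (x i) inferInstance) ≤
        ⨆ i ∈ Set.Iic (t + 1), MeasurableSpace.comap (x i) inferInstance :=
      biSup_mono fun i hi => (Set.mem_Iic.1 hi).trans t.le_succ
    have hXt := ih.mono hmono le_rfl
    have hx : Measurable[⨆ i ∈ Set.Iic (t + 1), MeasurableSpace.comap (x i) inferInstance]
        (x (t + 1)) :=
      (comap_measurable (x (t + 1))).mono (le_iSup₂ (f := fun i (_ : i ∈ Set.Iic (t + 1)) =>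
        MeasurableSpace.comap (x i) inferInstance) (t + 1) Set.self_mem_Iic) le_rfl
    exact ((hXt.add hx).sub measurable_const).sub
      (measurable_const.mul (Real.measurable_sign.comp hXt))

section

variable {Ω : Type*} [MeasurableSpace Ω] {μ : Measure Ω}

lemma ProbabilityTheory.iIndepFun.indepFun_of_measurable_iSup {ι β γ : Type*}
    [mβ : MeasurableSpace β] [MeasurableSpace γ] {x : ι → Ω → β} (hx : ∀ i, Measurable (x i))
    (hind : iIndepFun x μ) {S : Set ι} {j : ι} (hj : j ∉ S) {Y : Ω → γ}
    (hY : Measurable[⨆ i ∈ S, mβ.comap (x i)] Y) :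
    IndepFun Y (x j) μ := by
  have h := indep_iSup_of_disjoint (fun i => (hx i).comap_le)
    ((iIndepFun_iff_iIndep _ _ _).1 hind) (Set.disjoint_singleton_right.2 hj)
  rw [IndepFun_iff_Indep]
  exact indep_of_indep_of_le h hY.comap_le (le_iSup₂ (f := fun i (_ : i ∈ ({j} : Set ι)) =>
    mβ.comap (x i)) j rfl)

lemma ae_eq_zero_or_eq_one [IsProbabilityMeasure μ] {B : Ω → ℝ} (hB : Measurable B)
    (hBern : μ {ω | B ω = 1} = 1/2 ∧ μ {ω | B ω = 0} = 1/2) :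
    ∀ᵐ ω ∂μ, B ω = 0 ∨ B ω = 1 := by
  have hdisj : Disjoint {ω | B ω = 0} {ω | B ω = 1} :=
    Set.disjoint_left.2 fun ω h₀ h₁ => zero_ne_one (h₀.symm.trans h₁)
  have hunion : μ ({ω | B ω = 0} ∪ {ω | B ω = 1}) = 1 := by
    rw [measure_union hdisj (hB (measurableSet_singleton 1)), hBern.1, hBern.2,
      ENNReal.add_halves]
  exact (ae_iff_measure_eq ((hB (measurableSet_singleton 0)).union
    (hB (measurableSet_singleton 1))).nullMeasurableSet).2 (hunion.trans measure_univ.symm)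

lemma ProbabilityTheory.IndepFun.measure_tails_inter_preimage_add {Y B : Ω → ℝ}
    (hY : Measurable Y) (hYB : IndepFun Y B μ) {a b : ℝ} {q : ℝ≥0∞} (ha : μ (B ⁻¹' {a}) = q)
    (hb : μ (B ⁻¹' {b}) = q) {c : ℝ} (hc : 0 < c) :
    μ (Y ⁻¹' Set.Ici c ∩ B ⁻¹' {a}) + μ (Y ⁻¹' Set.Iic (-c) ∩ B ⁻¹' {b}) =
      q * μ {ω | c ≤ |Y ω|} := by
  have hdisj : Disjoint (Y ⁻¹' Set.Ici c) (Y ⁻¹' Set.Iic (-c)) :=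
    Set.disjoint_left.2 fun ω h₁ h₂ => by
      simp only [Set.mem_preimage, Set.mem_Ici, Set.mem_Iic] at h₁ h₂; linarith
  have htails : Y ⁻¹' Set.Ici c ∪ Y ⁻¹' Set.Iic (-c) = {ω | c ≤ |Y ω|} := by
    ext ω; simp only [Set.mem_union, Set.mem_preimage, Set.mem_Ici, Set.mem_Iic,
      Set.mem_ofPred_eq, le_abs']; tauto
  rw [hYB.measure_inter_preimage_eq_mul _ _ measurableSet_Ici (measurableSet_singleton a),
    hYB.measure_inter_preimage_eq_mul _ _ measurableSet_Iic (measurableSet_singleton b),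
    ha, hb, ← add_mul, ← measure_union hdisj (hY measurableSet_Iic), htails, mul_comm]

lemma measure_abs_step_ge_le [IsProbabilityMeasure μ] {ε Δ : ℝ} (hε : 0 < ε)
    (hΔ : ε + 1/2 < Δ) {Y B : Ω → ℝ} (hY : Measurable Y) (hB : Measurable B)
    (hYB : IndepFun Y B μ) (hBern : μ {ω | B ω = 1} = 1/2 ∧ μ {ω | B ω = 0} = 1/2) :
    μ {ω | Δ ≤ |Y ω + B ω - 1/2 - ε * sign (Y ω)|} ≤
      1/2 * μ {ω | Δ + ε - 1/2 ≤ |Y ω|} + 1/2 * μ {ω | Δ + ε + 1/2 ≤ |Y ω|} := by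
  have hc₁ : 0 < Δ + ε - 1/2 := by linarith
  have hc₂ : 0 < Δ + ε + 1/2 := by linarith
  set c₁ := Δ + ε - 1/2
  set c₂ := Δ + ε + 1/2
  have hsub : ({ω | Δ ≤ |Y ω + B ω - 1/2 - ε * sign (Y ω)|} : Set Ω) ≤ᵐ[μ]
      (((Y ⁻¹' Set.Ici c₁ ∩ B ⁻¹' {1}) ∪ (Y ⁻¹' Set.Iic (-c₁) ∩ B ⁻¹' {0})) ∪
        ((Y ⁻¹' Set.Ici c₂ ∩ B ⁻¹' {0}) ∪ (Y ⁻¹' Set.Iic (-c₂) ∩ B ⁻¹' {1})) : Set Ω) := by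
    filter_upwards [ae_eq_zero_or_eq_one hB hBern] with ω hω hstep
    have := abs_step_ge_cases hε hω hΔ hstep
    change ω ∈ (_ : Set Ω)
    simp only [Set.mem_union, Set.mem_inter_iff, Set.mem_preimage, Set.mem_Ici, Set.mem_Iic,
      Set.mem_singleton_iff]
    tauto
  calc _ ≤ _ := measure_mono_ae hsub
    _ ≤ (μ (Y ⁻¹' Set.Ici c₁ ∩ B ⁻¹' {1}) + μ (Y ⁻¹' Set.Iic (-c₁) ∩ B ⁻¹' {0})) +
        (μ (Y ⁻¹' Set.Ici c₂ ∩ B ⁻¹' {0}) + μ (Y ⁻¹' Set.Iic (-c₂) ∩ B ⁻¹' {1})) :=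
      (measure_union_le _ _).trans (add_le_add (measure_union_le _ _) (measure_union_le _ _))
    _ = _ := by
      rw [hYB.measure_tails_inter_preimage_add hY hBern.1 hBern.2 hc₁,
        hYB.measure_tails_inter_preimage_add hY hBern.2 hBern.1 hc₂]

end

/-- Exponential tail bound for the controlled random walk with fixed bias ε. -/
theorem controlled_walk_tail (ε : ℝ) (hε0 : 0 < ε) (hε1 : ε ≤ 1/2)
    {Ω : Type*} [MeasurableSpace Ω] (μ : Measure Ω) [IsProbabilityMeasure μ]
    (x : ℕ → Ω → ℝ) (hmeas : ∀ n, Measurable (x n))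
    (hindep : iIndepFun x μ)
    (hBern : ∀ n, μ {ω | x n ω = 1} = 1/2 ∧ μ {ω | x n ω = 0} = 1/2)
    (X : ℕ → Ω → ℝ) (hX0 : ∀ ω, X 0 ω = 0)
    (hXrec : ∀ t ω, X (t + 1) ω = X t ω + x (t + 1) ω - 1/2 - ε * Real.sign (X t ω)) :
    ∀ (t : ℕ) (Δ : ℝ), 0 ≤ Δ →
      μ {ω | Δ ≤ |X t ω|} ≤ ENNReal.ofReal (Real.exp (1/2) * Real.exp (-(ε * Δ))) := by
  have hadapted := controlledWalk_measurable_iSup hX0 hXrec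
  have hXmeas (t : ℕ) : Measurable (X t) :=
    (hadapted t).mono (iSup₂_le fun i _ => (hmeas i).comap_le) le_rfl
  have hXindep (t : ℕ) : IndepFun (X t) (x (t + 1)) μ :=
    hindep.indepFun_of_measurable_iSup hmeas (by simp) (hadapted t)
  intro t Δ _
  refine le_ofReal_exp_of_tail_recursion hε0 hε1 (fun t Δ => μ {ω | Δ ≤ |X t ω|})
    (fun _ _ => prob_le_one) (fun Δ hΔ => ?_) (fun t Δ hΔε => ?_) t Δ
  · simp [hX0, hΔ.not_ge]
  · simp only [hXrec]
    exact measure_abs_step_ge_le hε0 hΔε (hXmeas t) (hmeas _) (hXindep t) (hBern _)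
end

section
/- For any x, y ∈ [0,1] and Δ_x, Δ_y ∈ ℝ, there exists a 1-Lipschitz function f : [0,1] → [−1,1] such that f(x)·Δ_x + f(y)·Δ_y equals |Δ_x| + |Δ_y| if Δ_x·Δ_y ≥ 0, and equals |Δ_x + Δ_y| + |x − y|·min{|Δ_x|, |Δ_y|} if Δ_x·Δ_y < 0. -/
lemma tent_lip (p : ℝ) : LipschitzWith 1 (fun t : ℝ => 1 - |t - p|) := by
  apply LipschitzWith.of_dist_le_mul
  intro a b
  simp only [Real.dist_eq, NNReal.coe_one, one_mul]
  have h2 : (1 - |a - p|) - (1 - |b - p|) = -(|a - p| - |b - p|) := by ring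
  rw [h2, abs_neg]
  calc abs (|a - p| - |b - p|) ≤ |(a - p) - (b - p)| := abs_abs_sub_abs_le_abs_sub _ _
    _ = |a - b| := by ring_nf

lemma tent_bound (p : ℝ) (hp : p ∈ Set.Icc (0:ℝ) 1) (a : ℝ) (ha : a ∈ Set.Icc (0:ℝ) 1) :
    (1 - |a - p|) ∈ Set.Icc (-1:ℝ) 1 := by
  obtain ⟨h1, h2⟩ := hp
  obtain ⟨h3, h4⟩ := ha
  constructor
  · have : |a - p| ≤ 1 := by rw [abs_le]; constructor <;> linarith
    linarith
  · have : 0 ≤ |a - p| := abs_nonneg _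
    linarith

/-- Mixed-sign case: Δx > 0 > Δy. -/
lemma mixed_case (x y : ℝ) (hx : x ∈ Set.Icc (0:ℝ) 1) (hy : y ∈ Set.Icc (0:ℝ) 1)
    (Δx Δy : ℝ) (hΔx : 0 < Δx) (hΔy : Δy < 0) :
    ∃ f : ℝ → ℝ, LipschitzOnWith 1 f (Set.Icc (0:ℝ) 1) ∧
      (∀ a ∈ Set.Icc (0:ℝ) 1, f a ∈ Set.Icc (-1:ℝ) 1) ∧
      f x * Δx + f y * Δy = |Δx + Δy| + |x - y| * min |Δx| |Δy| := by
  rcases le_or_gt (|Δy|) (|Δx|) with h | h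
  · -- f(t) = 1 - |t - x|
    refine ⟨fun t => 1 - |t - x|, (tent_lip x).lipschitzOnWith, fun a ha => tent_bound x hx a ha, ?_⟩
    have hay : |Δy| = -Δy := abs_of_neg hΔy
    have hax : |Δx| = Δx := abs_of_pos hΔx
    have hsum : 0 ≤ Δx + Δy := by rw [hay, hax] at h; linarith
    rw [min_eq_right h, abs_of_nonneg hsum, hay, abs_sub_comm x y]
    simp only [sub_self, abs_zero]
    ring
  · -- f(t) = |t - y| - 1
    refine ⟨fun t => -(1 - |t - y|), ((tent_lip y).neg).lipschitzOnWith, ?_, ?_⟩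
    · intro a ha
      have := tent_bound y hy a ha
      constructor <;> simp_all
    · have hay : |Δy| = -Δy := abs_of_neg hΔy
      have hax : |Δx| = Δx := abs_of_pos hΔx
      have hsum : Δx + Δy < 0 := by rw [hay, hax] at h; linarith
      rw [min_eq_left h.le, abs_of_neg hsum, hax]
      simp only [sub_self, abs_zero]
      ring

/-- A two-point extremal Lipschitz function for the smooth calibration error. -/
theorem two_point_smCE (x y : ℝ) (hx : x ∈ Set.Icc (0:ℝ) 1) (hy : y ∈ Set.Icc (0:ℝ) 1)
    (Δx Δy : ℝ) :
    ∃ f : ℝ → ℝ, LipschitzOnWith 1 f (Set.Icc (0:ℝ) 1) ∧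
      (∀ a ∈ Set.Icc (0:ℝ) 1, f a ∈ Set.Icc (-1:ℝ) 1) ∧
      f x * Δx + f y * Δy =
        (if 0 ≤ Δx * Δy then |Δx| + |Δy|
         else |Δx + Δy| + |x - y| * min |Δx| |Δy|) := by
  by_cases h : 0 ≤ Δx * Δy
  · rw [if_pos h]
    rcases mul_nonneg_iff.mp h with ⟨h1, h2⟩ | ⟨h1, h2⟩
    · exact ⟨fun _ => 1, (LipschitzWith.const' 1).lipschitzOnWith,
        fun a _ => ⟨by norm_num, le_refl 1⟩,
        by rw [abs_of_nonneg h1, abs_of_nonneg h2]; ring⟩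
    · exact ⟨fun _ => -1, (LipschitzWith.const' (-1)).lipschitzOnWith,
        fun a _ => ⟨le_refl _, by norm_num⟩,
        by rw [abs_of_nonpos h1, abs_of_nonpos h2]; ring⟩
  · rw [if_neg h]
    push_neg at h
    rcases mul_neg_iff.mp h with ⟨h1, h2⟩ | ⟨h1, h2⟩
    · exact mixed_case x y hx hy Δx Δy h1 h2
    · obtain ⟨f, hf1, hf2, hf3⟩ := mixed_case y x hy hx Δy Δx h2 h1
      refine ⟨f, hf1, hf2, ?_⟩
      rw [add_comm (f x * Δx), hf3, add_comm Δy, abs_sub_comm y x, min_comm]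
end

section
/- Let T = 4, x = (0,1,0,1), and p = (1/2−ε, 1/2−ε, 1/2+ε, 1/2+ε) with 0 < ε < 1/30. Then LowerCalDist(x,p) ≤ 4ε²/(1/2 + ε). -/
private lemma single_app_nonneg (p c a : ℝ) (h : 0 ≤ c) : 0 ≤ Finsupp.single p c a := by
  rw [Finsupp.single_apply]; split_ifs <;> simp [h]

private lemma sum_supp_one (p c : ℝ) :
    ∑ a ∈ (Finsupp.single p c).support, Finsupp.single p c a = c := by
  show (Finsupp.single p c).sum (fun _ v => v) = c
  exact Finsupp.sum_single_index rfl

private lemma sum_supp_two (p₁ p₂ c₁ c₂ : ℝ) :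
    ∑ a ∈ (Finsupp.single p₁ c₁ + Finsupp.single p₂ c₂).support,
      (Finsupp.single p₁ c₁ + Finsupp.single p₂ c₂) a = c₁ + c₂ := by
  show (Finsupp.single p₁ c₁ + Finsupp.single p₂ c₂).sum (fun _ v => v) = c₁ + c₂
  rw [Finsupp.sum_add_index' (h := fun _ v => v) (fun _ => rfl) (fun _ _ _ => rfl),
    show (Finsupp.single p₁ c₁).sum (fun _ v => v) = c₁ from Finsupp.sum_single_index rfl,
    show (Finsupp.single p₂ c₂).sum (fun _ v => v) = c₂ from Finsupp.sum_single_index rfl]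

private lemma cost_one (p c q : ℝ) :
    ∑ a ∈ (Finsupp.single p c).support, Finsupp.single p c a * |q - a| = c * |q - p| := by
  show (Finsupp.single p c).sum (fun a v => v * |q - a|) = c * |q - p|
  exact Finsupp.sum_single_index (zero_mul _)

private lemma cost_two (p₁ p₂ c₁ c₂ q : ℝ) :
    ∑ a ∈ (Finsupp.single p₁ c₁ + Finsupp.single p₂ c₂).support,
      (Finsupp.single p₁ c₁ + Finsupp.single p₂ c₂) a * |q - a|
      = c₁ * |q - p₁| + c₂ * |q - p₂| := by
  show (Finsupp.single p₁ c₁ + Finsupp.single p₂ c₂).sum (fun a v => v * |q - a|) = _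
  rw [Finsupp.sum_add_index' (h := fun a v => v * |q - a|)
      (fun a => zero_mul _) (fun a b₁ b₂ => add_mul _ _ _),
    show (Finsupp.single p₁ c₁).sum (fun a v => v * |q - a|) = c₁ * |q - p₁| from
      Finsupp.sum_single_index (zero_mul _),
    show (Finsupp.single p₂ c₂).sum (fun a v => v * |q - a|) = c₂ * |q - p₂| from
      Finsupp.sum_single_index (zero_mul _)]

private lemma supp_single_sub (p c a : ℝ) (h : a ∈ (Finsupp.single p c).support) : a = p :=
  Finset.mem_singleton.1 (Finsupp.support_single_subset h)

set_option maxHeartbeats 1000000 in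
/-- For x = (0,1,0,1) and p = (1/2−ε, 1/2−ε, 1/2+ε, 1/2+ε), 0 < ε < 1/30,
the lower calibration distance is at most 4ε²/(1/2 + ε). Distributions are modeled as
finitely supported nonnegative weight functions summing to 1. -/
theorem lowerCalDist_example (ε : ℝ) (hε0 : 0 < ε) (hε1 : ε < 1/30) :
    sInf {c : ℝ | ∃ D : Fin 4 → (ℝ →₀ ℝ),
        (∀ t a, 0 ≤ D t a) ∧
        (∀ t, ∀ a ∈ (D t).support, a ∈ Set.Icc (0:ℝ) 1) ∧
        (∀ t, ∑ a ∈ (D t).support, D t a = 1) ∧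
        (∀ α : ℝ, ∑ t, ((![0, 1, 0, 1] : Fin 4 → ℝ) t - α) * D t α = 0) ∧
        c = ∑ t, ∑ a ∈ (D t).support,
          D t a * |(![1/2 - ε, 1/2 - ε, 1/2 + ε, 1/2 + ε] : Fin 4 → ℝ) t - a|} ≤
      4 * ε ^ 2 / (1/2 + ε) := by
  have hden : (0:ℝ) < 1/2 + ε := by linarith
  obtain ⟨β, hβdef⟩ : ∃ β : ℝ, β = (1/2 - ε) / (1/2 + ε) := ⟨_, rfl⟩
  have hβ0 : 0 < β := hβdef ▸ div_pos (by linarith) hden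
  have hβ1 : β < 1 := hβdef ▸ (div_lt_one hden).2 (by linarith)
  have hβeq : β * (1/2 + ε) = 1/2 - ε := by
    rw [hβdef]; exact div_mul_cancel₀ _ (ne_of_gt hden)
  apply csInf_le
  · refine ⟨0, ?_⟩
    rintro c ⟨D, hpos, -, -, -, rfl⟩
    apply Finset.sum_nonneg; intro t _
    apply Finset.sum_nonneg; intro a _
    exact mul_nonneg (hpos t a) (abs_nonneg _)
  · obtain ⟨E0, hE0⟩ : ∃ f : ℝ →₀ ℝ, f = Finsupp.single (1/2 - ε) 1 := ⟨_, rfl⟩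
    obtain ⟨E1, hE1⟩ : ∃ f : ℝ →₀ ℝ,
      f = Finsupp.single (1/2 - ε) β + Finsupp.single (1/2) (1-β) := ⟨_, rfl⟩
    obtain ⟨E2, hE2⟩ : ∃ f : ℝ →₀ ℝ,
      f = Finsupp.single (1/2 + ε) β + Finsupp.single (1/2) (1-β) := ⟨_, rfl⟩
    obtain ⟨E3, hE3⟩ : ∃ f : ℝ →₀ ℝ, f = Finsupp.single (1/2 + ε) 1 := ⟨_, rfl⟩
    refine ⟨![E0, E1, E2, E3], ?_, ?_, ?_, ?_, ?_⟩
    · intro t a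
      fin_cases t
      · show 0 ≤ E0 a
        rw [hE0]; exact single_app_nonneg _ _ _ (by linarith)
      · show 0 ≤ E1 a
        rw [hE1, Finsupp.add_apply]
        exact add_nonneg (single_app_nonneg _ _ _ (by linarith))
          (single_app_nonneg _ _ _ (by linarith))
      · show 0 ≤ E2 a
        rw [hE2, Finsupp.add_apply]
        exact add_nonneg (single_app_nonneg _ _ _ (by linarith))
          (single_app_nonneg _ _ _ (by linarith))
      · show 0 ≤ E3 a
        rw [hE3]; exact single_app_nonneg _ _ _ (by linarith)
    · intro t a ha
      fin_cases t
      · replace ha : a ∈ E0.support := ha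
        rw [hE0] at ha
        rw [supp_single_sub _ _ _ ha]; constructor <;> linarith
      · replace ha : a ∈ E1.support := ha
        rw [hE1] at ha
        rcases Finset.mem_union.1 (Finsupp.support_add ha) with h | h <;>
          rw [supp_single_sub _ _ _ h] <;> constructor <;> linarith
      · replace ha : a ∈ E2.support := ha
        rw [hE2] at ha
        rcases Finset.mem_union.1 (Finsupp.support_add ha) with h | h <;>
          rw [supp_single_sub _ _ _ h] <;> constructor <;> linarith
      · replace ha : a ∈ E3.support := ha
        rw [hE3] at ha
        rw [supp_single_sub _ _ _ ha]; constructor <;> linarith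
    · intro t
      fin_cases t
      · show ∑ a ∈ E0.support, E0 a = 1
        rw [hE0, sum_supp_one]
      · show ∑ a ∈ E1.support, E1 a = 1
        rw [hE1, sum_supp_two]; ring
      · show ∑ a ∈ E2.support, E2 a = 1
        rw [hE2, sum_supp_two]; ring
      · show ∑ a ∈ E3.support, E3 a = 1
        rw [hE3, sum_supp_one]
    · intro α
      rw [hE0, hE1, hE2, hE3]
      simp only [Fin.sum_univ_four, Matrix.cons_val_zero, Matrix.cons_val_one,
        Matrix.head_cons, Matrix.cons_val_two, Matrix.tail_cons, Matrix.cons_val_three,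
        Finsupp.add_apply, Finsupp.single_apply]
      split_ifs <;> first | linarith | nlinarith [hβeq]
    · rw [hE0, hE1, hE2, hE3]
      simp only [Fin.sum_univ_four, Matrix.cons_val_zero, Matrix.cons_val_one,
        Matrix.head_cons, Matrix.cons_val_two, Matrix.tail_cons, Matrix.cons_val_three]
      rw [cost_one, cost_two, cost_two, cost_one]
      have a1 : |(1/2 - ε) - (1/2 - ε)| = (0:ℝ) := by simp
      have a2 : |(1/2 - ε) - 1/2| = ε := by rw [abs_of_nonpos (by linarith)]; ring
      have a3 : |(1/2 + ε) - (1/2 + ε)| = (0:ℝ) := by simp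
      have a4 : |(1/2 + ε) - 1/2| = ε := by rw [abs_of_nonneg (by linarith)]; ring
      rw [a1, a2, a3, a4, hβdef]
      field_simp
      ring
end

section
/- There is no function f : ℕ → (0,∞) such that LowerCalDist(x,p) ≥ f(T)·CalDist(x,p) holds for all T, all x ∈ {0,1}^T, and all p ∈ [0,1]^T. -/
/-!
With binary outcomes, a calibrated forecast's value at `t` is the mean outcome `k / n` of its
level set, with `n ≤ T`; so it is either exactly `1/2` or at distance at least `1 / (2T)` from
`1/2`. Hence for `x = (0, 1, 1, 0)` and `p = (1/2 - u, 1/2 - u, 1/2 + u, 1/2 + u)` with small `u`,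
every calibrated `q` has `|p t - q t| ≥ u` for all `t`, and `CalDist(x, p) ≥ 4u`. A randomized
forecast may instead keep `p t` with probability `w t` and otherwise say `1/2`; weights
`w = (1, m, 1, m)` with `m = (1 - 2u) / (1 + 2u)` make every level calibrated at cost
`2(1 - m)u ≤ 8u²`. So `f 4 ≤ 2u` for all small `u > 0`, which is impossible.
-/

open Finset

section Calibration

variable {T : ℕ}

def IsCalibrated (x q : Fin T → ℝ) : Prop :=
  ∀ α : ℝ, ∑ t, (x t - q t) * (if q t = α then 1 else 0) = 0

noncomputable def calDist (x p : Fin T → ℝ) : ℝ :=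
  sInf {d : ℝ | ∃ q : Fin T → ℝ, (∀ t, q t ∈ Set.Icc (0:ℝ) 1) ∧ IsCalibrated x q ∧
    d = ∑ t, |p t - q t|}

noncomputable def lowerCalDist (x p : Fin T → ℝ) : ℝ :=
  sInf {c : ℝ | ∃ D : Fin T → (ℝ →₀ ℝ),
    (∀ t a, 0 ≤ D t a) ∧
    (∀ t, ∀ a ∈ (D t).support, a ∈ Set.Icc (0:ℝ) 1) ∧
    (∀ t, ∑ a ∈ (D t).support, D t a = 1) ∧
    (∀ α : ℝ, ∑ t, (x t - α) * D t α = 0) ∧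
    c = ∑ t, ∑ a ∈ (D t).support, D t a * |p t - a|}

lemma isCalibrated_self (x : Fin T → ℝ) : IsCalibrated x x := by
  intro α
  simp

lemma eq_half_or_one_le_mul_abs_of_mul_eq_int {r : ℝ} {n : ℕ} {k : ℤ} (hn : 0 < n)
    (h : n * r = k) :
    r = 1 / 2 ∨ 1 ≤ n * |2 * r - 1| := by
  have hz : (n : ℝ) * (2 * r - 1) = ((2 * k - n : ℤ) : ℝ) := by push_cast; linarith
  rcases eq_or_ne (2 * k - n) 0 with h0 | h0
  · left
    rw [h0, Int.cast_zero, mul_eq_zero] at hz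
    rcases hz with hz | hz
    · exact absurd hz (by positivity)
    · linarith
  · right
    calc (1 : ℝ) ≤ |((2 * k - n : ℤ) : ℝ)| := by exact_mod_cast Int.one_le_abs h0
      _ = n * |2 * r - 1| := by rw [← hz, abs_mul, Nat.abs_cast]

variable {x q p : Fin T → ℝ}

lemma IsCalibrated.exists_mul_eq_int (hx : ∀ t, x t = 0 ∨ x t = 1) (hq : IsCalibrated x q)
    (t : Fin T) : ∃ n : ℕ, 0 < n ∧ n ≤ T ∧ ∃ k : ℤ, n * q t = k := by
  set S := univ.filter fun s => q s = q t
  have hlevel : ∑ s ∈ S, (x s - q t) = 0 := by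
    rw [sum_filter]
    refine (sum_congr rfl fun s _ => ?_).trans (hq (q t))
    split_ifs with h <;> simp [h]
  have hint : ∀ s, x s = ((if x s = 1 then 1 else 0 : ℤ) : ℝ) := by
    intro s; rcases hx s with h | h <;> simp [h]
  refine ⟨#S, card_pos.2 ⟨t, by simp [S]⟩, (card_filter_le _ _).trans (card_fin T).le,
    ∑ s ∈ S, if x s = 1 then 1 else 0, ?_⟩
  rw [sum_sub_distrib, sum_const, nsmul_eq_mul, sub_eq_zero] at hlevel
  rw [← hlevel, Int.cast_sum]
  exact sum_congr rfl fun s _ => hint s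

lemma IsCalibrated.eq_half_or_one_le_mul_abs (hx : ∀ t, x t = 0 ∨ x t = 1)
    (hq : IsCalibrated x q) (t : Fin T) : q t = 1 / 2 ∨ 1 ≤ T * |2 * q t - 1| := by
  obtain ⟨n, hn, hnT, k, hk⟩ := hq.exists_mul_eq_int hx t
  refine (eq_half_or_one_le_mul_abs_of_mul_eq_int hn hk).imp_right fun h => h.trans ?_
  gcongr

lemma IsCalibrated.le_abs_sub (hx : ∀ t, x t = 0 ∨ x t = 1) (hq : IsCalibrated x q)
    {u : ℝ} (hu : 4 * T * u ≤ 1) (t : Fin T) (hp : |p t - 1 / 2| = u) : u ≤ |p t - q t| := by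
  rcases hq.eq_half_or_one_le_mul_abs hx t with h | h
  · rw [h, hp]
  · have hT : (0 : ℝ) < T := Nat.cast_pos.2 (Fin.pos t)
    have hfar : 4 * u ≤ |2 * q t - 1| := le_of_mul_le_mul_left (by linarith) hT
    have htri := abs_sub_abs_le_abs_sub (q t - 1 / 2) (p t - 1 / 2)
    rw [show 2 * q t - 1 = 2 * (q t - 1 / 2) by ring, abs_mul, abs_two] at hfar
    rw [abs_sub_comm, show q t - p t = q t - 1 / 2 - (p t - 1 / 2) by ring]
    linarith

lemma le_calDist (hx : ∀ t, x t ∈ Set.Icc (0:ℝ) 1) {c : ℝ}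
    (h : ∀ q, (∀ t, q t ∈ Set.Icc (0:ℝ) 1) → IsCalibrated x q →
      c ≤ ∑ t, |p t - q t|) :
    c ≤ calDist x p :=
  le_csInf ⟨_, x, hx, isCalibrated_self x, rfl⟩ fun _ ⟨q, hq01, hq, hd⟩ =>
    hd ▸ h q hq01 hq

lemma mul_le_calDist (hx : ∀ t, x t = 0 ∨ x t = 1) {u : ℝ} (hu : 4 * T * u ≤ 1)
    (hp : ∀ t, |p t - 1 / 2| = u) : T * u ≤ calDist x p := by
  refine le_calDist (fun t => ?_) fun q _ hq => ?_
  · rcases hx t with h | h <;> simp [h]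
  · calc (T : ℝ) * u = ∑ _ : Fin T, u := by simp
      _ ≤ ∑ t, |p t - q t| := sum_le_sum fun t _ => hq.le_abs_sub hx hu t (hp t)

end Calibration

lemma Finsupp.sum_support_single_add_single_mul {α : Type*} (a b : α) (c d : ℝ)
    (g : α → ℝ) :
    ∑ y ∈ (Finsupp.single a c + Finsupp.single b d).support,
      (Finsupp.single a c + Finsupp.single b d) y * g y = c * g a + d * g b := by
  change (Finsupp.single a c + Finsupp.single b d).sum (fun y w => w * g y) = _
  rw [Finsupp.sum_add_index' (fun _ => zero_mul _) (fun _ _ _ => add_mul _ _ _),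
    Finsupp.sum_single_index (zero_mul _), Finsupp.sum_single_index (zero_mul _)]

section LowerCalibration

variable {T : ℕ} {x p : Fin T → ℝ}

lemma lowerCalDist_le (D : Fin T → (ℝ →₀ ℝ)) (hD0 : ∀ t a, 0 ≤ D t a)
    (hD01 : ∀ t, ∀ a ∈ (D t).support, a ∈ Set.Icc (0:ℝ) 1)
    (hD1 : ∀ t, ∑ a ∈ (D t).support, D t a = 1)
    (hD : ∀ α : ℝ, ∑ t, (x t - α) * D t α = 0) :
    lowerCalDist x p ≤ ∑ t, ∑ a ∈ (D t).support, D t a * |p t - a| :=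
  csInf_le ⟨0, fun _ ⟨_, hE0, _, _, _, hc⟩ => hc ▸ sum_nonneg fun t _ =>
    sum_nonneg fun a _ => mul_nonneg (hE0 t a) (abs_nonneg _)⟩ ⟨D, hD0, hD01, hD1, hD, rfl⟩

lemma lowerCalDist_le_of_mix_half (hp : ∀ t, p t ∈ Set.Icc (0:ℝ) 1) (w : Fin T → ℝ)
    (hw : ∀ t, w t ∈ Set.Icc (0:ℝ) 1)
    (hcal : ∀ α : ℝ, ∑ t, (x t - α) *
      ((if p t = α then w t else 0) + (if 1 / 2 = α then 1 - w t else 0)) = 0) :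
    lowerCalDist x p ≤ ∑ t, (1 - w t) * |p t - 1 / 2| := by
  set D : Fin T → (ℝ →₀ ℝ) := fun t =>
    Finsupp.single (p t) (w t) + Finsupp.single (1 / 2) (1 - w t)
  have hsum (t : Fin T) (g : ℝ → ℝ) :
      ∑ a ∈ (D t).support, D t a * g a = w t * g (p t) + (1 - w t) * g (1 / 2) :=
    Finsupp.sum_support_single_add_single_mul _ _ _ _ g
  refine (lowerCalDist_le D (fun t a => ?_) (fun t a ha => ?_) (fun t => ?_) ?_).trans_eq ?_
  · obtain ⟨hw0, hw1⟩ := hw t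
    exact add_nonneg (Finsupp.single_nonneg.2 hw0 a) (Finsupp.single_nonneg.2 (by linarith) a)
  · rcases Finset.mem_union.1 (Finsupp.support_add ha) with h | h
    · rw [Finset.mem_singleton.1 (Finsupp.support_single_subset h)]; exact hp t
    · rw [Finset.mem_singleton.1 (Finsupp.support_single_subset h)]; norm_num
  · simpa using hsum t 1
  · simpa only [D, Finsupp.add_apply, Finsupp.single_apply] using hcal
  · simp [hsum]

end LowerCalibration

def gapOutcomes : Fin 4 → ℝ := ![0, 1, 1, 0]

noncomputable def gapForecasts (u : ℝ) : Fin 4 → ℝ :=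
  ![1 / 2 - u, 1 / 2 - u, 1 / 2 + u, 1 / 2 + u]

lemma gapOutcomes_eq_zero_or_one (t : Fin 4) : gapOutcomes t = 0 ∨ gapOutcomes t = 1 := by
  fin_cases t <;> simp [gapOutcomes]

lemma gapForecasts_mem_Icc {u : ℝ} (hu0 : 0 ≤ u) (hu : u ≤ 1 / 2) (t : Fin 4) :
    gapForecasts u t ∈ Set.Icc (0 : ℝ) 1 := by
  fin_cases t <;> simp [gapForecasts] <;> constructor <;> linarith

lemma four_mul_le_calDist_gap {u : ℝ} (hu0 : 0 ≤ u) (hu : u ≤ 1 / 16) :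
    4 * u ≤ calDist gapOutcomes (gapForecasts u) := by
  have hp (t : Fin 4) : |gapForecasts u t - 1 / 2| = u := by
    fin_cases t <;> simp [gapForecasts, abs_of_nonneg hu0]
  simpa using mul_le_calDist gapOutcomes_eq_zero_or_one (by norm_num; linarith) hp

lemma lowerCalDist_gap_le {u : ℝ} (hu0 : 0 < u) (hu : u ≤ 1 / 2) :
    lowerCalDist gapOutcomes (gapForecasts u) ≤ 8 * u ^ 2 := by
  -- Round 1 (outcome 1) keeps weight m on 1/2 - u so that this level has mean outcome
  -- m / (1 + m) = 1/2 - u; round 3 does the same for 1/2 + u, and their leftover mass 1 - m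
  -- forms the level 1/2 with one outcome 1 and one outcome 0.
  obtain ⟨m, hm, hm0, hm1⟩ : ∃ m : ℝ, (1 + 2 * u) * m = 1 - 2 * u ∧ 0 ≤ m ∧ m ≤ 1 :=
    ⟨(1 - 2 * u) / (1 + 2 * u), by field_simp, div_nonneg (by linarith) (by linarith),
      (div_le_one (by linarith)).2 (by linarith)⟩
  refine (lowerCalDist_le_of_mix_half (gapForecasts_mem_Icc hu0.le hu) ![1, m, 1, m]
    (fun t => ?_) (fun α => ?_)).trans ?_
  · fin_cases t <;> simp [hm0, hm1]
  · have h1 : (2⁻¹ - u : ℝ) ≠ 2⁻¹ := by linarith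
    have h2 : (2⁻¹ + u : ℝ) ≠ 2⁻¹ := by linarith
    have h3 : (2⁻¹ - u : ℝ) ≠ 2⁻¹ + u := by linarith
    rcases eq_or_ne α (2⁻¹ - u) with rfl | hα₁
    · simp [gapOutcomes, gapForecasts, Fin.sum_univ_four, h1.symm, h3.symm]
      linear_combination hm / 2
    rcases eq_or_ne α (2⁻¹ + u) with rfl | hα₂
    · simp [gapOutcomes, gapForecasts, Fin.sum_univ_four, h2.symm, h3]
      linear_combination -hm / 2
    rcases eq_or_ne α 2⁻¹ with rfl | hα₃
    · simp [gapOutcomes, gapForecasts, Fin.sum_univ_four, h1, h2]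
      ring
    simp [gapOutcomes, gapForecasts, Fin.sum_univ_four, hα₁.symm, hα₂.symm, hα₃.symm]
  · simp [gapForecasts, Fin.sum_univ_four, abs_of_pos hu0]
    nlinarith

/-- No multiplicative approximation: there is no f : ℕ → (0,∞) with
LowerCalDist(x,p) ≥ f(T)·CalDist(x,p) for all T, x ∈ {0,1}^T, p ∈ [0,1]^T. -/
theorem no_multiplicative_approx :
    ¬ ∃ f : ℕ → ℝ, (∀ T, 0 < f T) ∧
      ∀ (T : ℕ) (x p : Fin T → ℝ), (∀ t, x t = 0 ∨ x t = 1) →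
        (∀ t, p t ∈ Set.Icc (0:ℝ) 1) →
        f T * sInf {d : ℝ | ∃ q : Fin T → ℝ, (∀ t, q t ∈ Set.Icc (0:ℝ) 1) ∧
            (∀ α : ℝ, ∑ t, (x t - q t) * (if q t = α then 1 else 0) = 0) ∧
            d = ∑ t, |p t - q t|} ≤
          sInf {c : ℝ | ∃ D : Fin T → (ℝ →₀ ℝ),
            (∀ t a, 0 ≤ D t a) ∧
            (∀ t, ∀ a ∈ (D t).support, a ∈ Set.Icc (0:ℝ) 1) ∧
            (∀ t, ∑ a ∈ (D t).support, D t a = 1) ∧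
            (∀ α : ℝ, ∑ t, (x t - α) * D t α = 0) ∧
            c = ∑ t, ∑ a ∈ (D t).support, D t a * |p t - a|} := by
  rintro ⟨f, hf0, hf⟩
  set u := min (1 / 16) (f 4 / 4)
  have hu0 : 0 < u := lt_min (by norm_num) (by linarith [hf0 4])
  have hu : u ≤ 1 / 16 := min_le_left _ _
  have hmult : f 4 * calDist gapOutcomes (gapForecasts u) ≤
      lowerCalDist gapOutcomes (gapForecasts u) :=
    hf 4 _ _ gapOutcomes_eq_zero_or_one (gapForecasts_mem_Icc hu0.le (by linarith))
  have hquad : f 4 * (4 * u) ≤ 8 * u ^ 2 :=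
    (mul_le_mul_of_nonneg_left (four_mul_le_calDist_gap hu0.le hu) (hf0 4).le).trans
      (hmult.trans (lowerCalDist_gap_le hu0 (by linarith)))
  have hf4 : f 4 ≤ 2 * u := by nlinarith
  linarith [min_le_right (1 / 16 : ℝ) (f 4 / 4), hf0 4]
end

section
/- For x ∈ {0,1}^T and p ∈ [0,1]^T, if D₁,…,D_T are probability distributions supported on a finite set S ⊂ [0,1] with Σ_{t=1}^T (x_t − α)·D_t({α}) = 0 for every α ∈ [0,1], then CalDist(x,p) ≤ Σ_{t=1}^T E_{q_t∼D_t}|p_t − q_t| + 4|S|. -/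
/-!
Split each forecast `D t` according to the outcome `x t`: this is a fractional assignment of the
rounds to the pairs `(a, b) ∈ S × {0, 1}`. Birkhoff's theorem rounds it to an integral assignment
`t ↦ (y t, x t)` with `∑ |p t - y t|` no larger and with class sizes `k (a, b) ≤ ⌈o (a, b)⌉`,
where `o` are the fractional class sizes; since both add up to `T`, `∑ |k - o| ≤ 2 |S × {0, 1}|`.
Predicting in each bucket `{t | y t = a}` the mean outcome of that bucket is calibrated, and moves
the bucket's predictions by `|∑ₜ (a - x t)| = |∑_b (k (a, b) - o (a, b)) (a - b)|`, because the
calibration of `D` gives `∑_b o (a, b) (a - b) = 0`. Summing over `a` gives `4 |S|`.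
-/

open Finset

theorem exists_perm_pos_sum_le_of_mem_doublyStochastic {n : Type*} [Fintype n] [DecidableEq n]
    {M : Matrix n n ℝ} (hM : M ∈ doublyStochastic ℝ n) (c : n → n → ℝ) :
    ∃ σ : Equiv.Perm n, (∀ i, 0 < M i (σ i)) ∧ ∑ i, c i (σ i) ≤ ∑ i, ∑ j, M i j * c i j := by
  obtain ⟨w, hw0, hw1, rfl⟩ := exists_eq_sum_perm_of_mem_doublyStochastic hM
  set M := ∑ σ, w σ • σ.permMatrix ℝ
  have hentry (i j : n) : M i j = ∑ σ, if σ i = j then w σ else 0 := by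
    simp [M, Matrix.sum_apply, Equiv.Perm.permMatrix, PEquiv.toMatrix_apply, eq_comm]
  have hcost : ∑ i, ∑ j, M i j * c i j = ∑ σ, w σ * ∑ i, c i (σ i) := by
    calc ∑ i, ∑ j, M i j * c i j = ∑ i, ∑ σ : Equiv.Perm n, w σ * c i (σ i) := by
          refine sum_congr rfl fun i _ => ?_
          simp only [hentry, sum_mul, ite_mul, zero_mul]
          rw [sum_comm]
          simp
      _ = ∑ σ, w σ * ∑ i, c i (σ i) := by
          rw [sum_comm]
          simp only [mul_sum]
  set s := univ.filter fun σ : Equiv.Perm n => 0 < w σ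
  have hws (f : Equiv.Perm n → ℝ) : ∑ σ ∈ s, w σ * f σ = ∑ σ, w σ * f σ :=
    sum_filter_of_ne fun σ _ h => (hw0 σ).lt_of_ne' (left_ne_zero_of_mul h)
  have hs : s.Nonempty := by
    refine nonempty_of_sum_ne_zero (f := fun σ => w σ * 1) ?_
    rw [hws]
    simp [hw1]
  obtain ⟨σ, hσs, hσ⟩ := exists_le_of_sum_le hs (f := fun σ => w σ * ∑ i, c i (σ i))
    (g := fun σ => w σ * ∑ i, ∑ j, M i j * c i j) (by
      rw [hws, hws, ← sum_mul, hw1, one_mul, hcost])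
  have hwσ : 0 < w σ := (mem_filter.1 hσs).2
  refine ⟨σ, fun i => ?_, le_of_mul_le_mul_left hσ hwσ⟩
  rw [hentry]
  exact hwσ.trans_le <| (if_pos rfl).symm.trans_le <|
    single_le_sum (f := fun τ => if τ i = σ i then w τ else 0)
      (fun τ _ => ite_nonneg (hw0 τ) le_rfl) (mem_univ σ)

theorem exists_injective_pos_sum_le {ι κ : Type*} [Fintype ι] [Fintype κ] [DecidableEq ι]
    [DecidableEq κ] {A : ι → κ → ℝ} (hA : ∀ i j, 0 ≤ A i j) (hrow : ∀ i, ∑ j, A i j = 1)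
    (hcol : ∀ j, ∑ i, A i j ≤ 1) (c : ι → κ → ℝ) :
    ∃ g : ι → κ, Function.Injective g ∧ (∀ i, 0 < A i (g i)) ∧
      ∑ i, c i (g i) ≤ ∑ i, ∑ j, A i j * c i j := by
  -- Birkhoff applies to the doubly stochastic dilation `[[0, A], [Aᵀ, 1 - diag (colsums A)]]`.
  set M : Matrix (ι ⊕ κ) (ι ⊕ κ) ℝ :=
    Matrix.fromBlocks 0 (Matrix.of A) (Matrix.of A).transpose
      (Matrix.diagonal fun j => 1 - ∑ i, A i j)
  have hM : M ∈ doublyStochastic ℝ (ι ⊕ κ) := by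
    refine mem_doublyStochastic_iff_sum.2 ⟨?_, ?_, ?_⟩
    · rintro (i | j) (i' | j')
      · simp [M]
      · simpa [M] using hA i j'
      · simpa [M] using hA i' j
      · simpa [M, Matrix.diagonal_apply] using ite_nonneg (sub_nonneg.2 (hcol j)) le_rfl
    · rintro (i | j) <;> simp [M, Fintype.sum_sum_type, hrow, Matrix.diagonal_apply]
    · rintro (i | j) <;> simp [M, Fintype.sum_sum_type, hrow, Matrix.diagonal_apply]
  obtain ⟨τ, hτpos, hτ⟩ := exists_perm_pos_sum_le_of_mem_doublyStochastic hM
    (Sum.elim (fun i => Sum.elim 0 (c i)) 0)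
  have hτ_inr (i : ι) : ∃ j, τ (.inl i) = .inr j := by
    have := hτpos (.inl i)
    rcases h : τ (.inl i) with i' | j
    · simp [M, h] at this
    · exact ⟨j, rfl⟩
  choose g hg using hτ_inr
  refine ⟨g, fun i i' h => ?_, fun i => ?_, ?_⟩
  · simpa using τ.injective ((hg i).trans ((congrArg Sum.inr h).trans (hg i').symm))
  · simpa [M, hg] using hτpos (.inl i)
  · simpa [M, Fintype.sum_sum_type, hg] using hτ

theorem exists_pos_card_fiber_le_sum_le {ι β : Type*} [Fintype ι] [DecidableEq ι]
    [DecidableEq β] (S : Finset β) {π : ι → β → ℝ} (K : β → ℕ) (hπ : ∀ t a, 0 ≤ π t a)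
    (hrow : ∀ t, ∑ a ∈ S, π t a = 1) (hcol : ∀ a ∈ S, ∑ t, π t a ≤ K a) (c : ι → β → ℝ) :
    ∃ σ : ι → β, (∀ t, σ t ∈ S) ∧ (∀ t, 0 < π t (σ t)) ∧ (∀ a ∈ S, #{t | σ t = a} ≤ K a) ∧
      ∑ t, c t (σ t) ≤ ∑ t, ∑ a ∈ S, π t a * c t a := by
  -- Split each `a ∈ S` into `K a` unit-capacity slots and spread its mass evenly over them.
  let J := Σ a : S, Fin (K a)
  have sum_slots (F : β → ℝ) : ∑ s : J, F s.1 = ∑ a ∈ S, K a * F a := by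
    rw [Fintype.sum_sigma, ← sum_coe_sort S]
    simp
  have hK (s : J) : (0 : ℝ) < K s.1 := by exact_mod_cast Fin.pos s.2
  have hπ_zero (t : ι) (a : β) (ha : a ∈ S) (h : K a = 0) : π t a = 0 := by
    have hsum : ∑ t, π t a = 0 :=
      le_antisymm (by simpa [h] using hcol a ha) (sum_nonneg fun t _ => hπ t a)
    exact (sum_eq_zero_iff_of_nonneg fun t _ => hπ t a).1 hsum t (mem_univ t)
  have collapse (t : ι) (f : β → ℝ) :
      ∑ s : J, π t s.1 / K s.1 * f s.1 = ∑ a ∈ S, π t a * f a := by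
    rw [sum_slots fun a => π t a / K a * f a]
    refine sum_congr rfl fun a ha => ?_
    rcases eq_or_ne (K a) 0 with h | h
    · simp [h, hπ_zero t a ha h]
    · field_simp
  obtain ⟨g, hg_inj, hg_pos, hg_cost⟩ :=
    exists_injective_pos_sum_le (A := fun t (s : J) => π t s.1 / K s.1)
    (fun t s => div_nonneg (hπ t _) (hK s).le) (fun t => by simpa [hrow] using collapse t 1)
    (fun s => by rw [← sum_div, div_le_one (hK s)]; exact hcol s.1 s.1.2) (fun t s => c t s.1)
  refine ⟨fun t => (g t).1, fun t => (g t).1.2, fun t => ?_, fun a ha => ?_, ?_⟩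
  · exact (div_pos_iff_of_pos_right (hK (g t))).1 (hg_pos t)
  · have hcard : #{s : J | (s.1 : β) = a} = K a := by
      rw [← Nat.cast_inj (R := ℝ), card_filter, Nat.cast_sum]
      simpa [ha] using sum_slots fun b => if b = a then 1 else 0
    have : #{t | ((g t).1 : β) = a} ≤ #{s : J | (s.1 : β) = a} :=
      card_le_card_of_injOn g (fun t ht => by simpa using ht) hg_inj.injOn
    exact this.trans hcard.le
  · simpa only [collapse] using hg_cost

theorem sum_abs_sub_le_two_mul_card {β : Type*} (S : Finset β) {u v : β → ℝ}
    (hsum : ∑ a ∈ S, u a = ∑ a ∈ S, v a) (hle : ∀ a ∈ S, u a ≤ v a + 1) :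
    ∑ a ∈ S, |u a - v a| ≤ 2 * #S := by
  have habs (e : ℝ) : |e| = 2 * max e 0 - e := by
    rcases le_total e 0 with h | h <;> simp [abs_of_nonpos, abs_of_nonneg, h]; ring
  calc ∑ a ∈ S, |u a - v a|
      = 2 * ∑ a ∈ S, max (u a - v a) 0 - (∑ a ∈ S, u a - ∑ a ∈ S, v a) := by
        simp only [habs, sum_sub_distrib, mul_sum]
    _ ≤ 2 * ∑ a ∈ S, (1 : ℝ) - 0 := by
        rw [hsum, sub_self]
        gcongr with a ha
        exact max_le (by linarith [hle a ha]) zero_le_one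
    _ = 2 * #S := by simp

theorem exists_integral_rounding {ι β : Type*} [Fintype ι] [DecidableEq ι] [DecidableEq β]
    (S : Finset β) {π : ι → β → ℝ} (hπ : ∀ t a, 0 ≤ π t a) (hrow : ∀ t, ∑ a ∈ S, π t a = 1)
    (c : ι → β → ℝ) :
    ∃ σ : ι → β, (∀ t, σ t ∈ S) ∧ (∀ t, 0 < π t (σ t)) ∧
      ∑ a ∈ S, |(#{t | σ t = a} : ℝ) - ∑ t, π t a| ≤ 2 * #S ∧
      ∑ t, c t (σ t) ≤ ∑ t, ∑ a ∈ S, π t a * c t a := by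
  obtain ⟨σ, hσS, hσpos, hσcard, hσcost⟩ := exists_pos_card_fiber_le_sum_le S
    (fun a => ⌈∑ t, π t a⌉₊) hπ hrow (fun a _ => Nat.le_ceil _) c
  refine ⟨σ, hσS, hσpos, sum_abs_sub_le_two_mul_card S ?_ fun a ha => ?_, hσcost⟩
  · rw [← Nat.cast_sum, ← card_eq_sum_card_fiberwise fun t _ => hσS t, sum_comm]
    simp [hrow]
  · calc (#{t | σ t = a} : ℝ) ≤ ⌈∑ t, π t a⌉₊ := by exact_mod_cast hσcard a ha
      _ ≤ ∑ t, π t a + 1 := (Nat.ceil_lt_add_one (sum_nonneg fun t _ => hπ t a)).le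

theorem sum_comp_sub_sum_sum_mul {ι β : Type*} [Fintype ι] [DecidableEq β] {P : Finset β}
    {σ : ι → β} (hσ : ∀ t, σ t ∈ P) (π : ι → β → ℝ) (F : β → ℝ) :
    ∑ t, F (σ t) - ∑ t, ∑ p ∈ P, π t p * F p =
      ∑ p ∈ P, (#{t | σ t = p} - ∑ t, π t p) * F p := by
  rw [← sum_fiberwise_of_maps_to (g := σ) (t := P) (fun t _ => hσ t), sum_comm]
  simp only [sub_mul, sum_sub_distrib, sum_mul]
  congr 1
  refine sum_congr rfl fun p _ => ?_
  rw [sum_congr rfl fun t ht => by rw [(mem_filter.1 ht).2], sum_const, nsmul_eq_mul]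

section BucketMean

variable {ι β : Type*} [Fintype ι] [DecidableEq β]

noncomputable def bucketMean (x : ι → ℝ) (c : ι → β) (a : β) : ℝ :=
  (∑ t with c t = a, x t) / #{t | c t = a}

theorem card_mul_bucketMean (x : ι → ℝ) (c : ι → β) (a : β) :
    #{t | c t = a} * bucketMean x c a = ∑ t with c t = a, x t := by
  rcases eq_or_ne #{t | c t = a} 0 with h | h
  · simp [bucketMean, card_eq_zero.1 h]
  · exact mul_div_cancel₀ _ (Nat.cast_ne_zero.2 h)

theorem bucketMean_mem_Icc {x : ι → ℝ} (hx : ∀ t, x t ∈ Set.Icc 0 1) (c : ι → β) (a : β) :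
    bucketMean x c a ∈ Set.Icc 0 1 := by
  refine ⟨div_nonneg (sum_nonneg fun t _ => (hx t).1) (Nat.cast_nonneg _),
    div_le_one_of_le₀ ?_ (Nat.cast_nonneg _)⟩
  simpa using sum_le_sum fun t (_ : t ∈ ({t | c t = a} : Finset ι)) => (hx t).2

theorem sum_sub_bucketMean_mul_ite_eq_zero (x : ι → ℝ) (c : ι → β) (α : ℝ) :
    ∑ t, (x t - bucketMean x c (c t)) * (if bucketMean x c (c t) = α then 1 else 0) = 0 := by
  rw [← sum_fiberwise_of_maps_to (g := c) (t := univ.image c)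
    fun t _ => mem_image_of_mem c (mem_univ t)]
  refine sum_eq_zero fun a _ => ?_
  calc ∑ t with c t = a, (x t - bucketMean x c (c t)) *
        (if bucketMean x c (c t) = α then 1 else 0)
      = (∑ t with c t = a, x t - #{t | c t = a} * bucketMean x c a) *
          (if bucketMean x c a = α then 1 else 0) := by
        rw [sum_congr rfl fun t ht => by rw [(mem_filter.1 ht).2], ← sum_mul, sum_sub_distrib,
          sum_const, nsmul_eq_mul]
    _ = 0 := by rw [card_mul_bucketMean, sub_self, zero_mul]

theorem sum_abs_sub_bucketMean {S : Finset ℝ} (x : ι → ℝ) {c : ι → ℝ} (hc : ∀ t, c t ∈ S) :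
    ∑ t, |c t - bucketMean x c (c t)| = ∑ a ∈ S, |∑ t with c t = a, (a - x t)| := by
  rw [← sum_fiberwise_of_maps_to (g := c) (t := S) (fun t _ => hc t)]
  refine sum_congr rfl fun a _ => ?_
  calc ∑ t with c t = a, |c t - bucketMean x c (c t)|
      = #{t | c t = a} * |a - bucketMean x c a| := by
        rw [← nsmul_eq_mul, ← sum_const]
        exact sum_congr rfl fun t ht => by rw [(mem_filter.1 ht).2]
    _ = |∑ t with c t = a, (a - x t)| := by
        rw [← Nat.abs_cast, ← abs_mul, mul_sub, card_mul_bucketMean, sum_sub_distrib, sum_const,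
          nsmul_eq_mul]

end BucketMean

theorem sum_abs_sub_bucketMean_le {ι : Type*} [Fintype ι] {S B : Finset ℝ}
    (hS : ∀ a ∈ S, a ∈ Set.Icc (0:ℝ) 1) (hB : ∀ b ∈ B, b ∈ Set.Icc (0:ℝ) 1) {x : ι → ℝ}
    {σ : ι → ℝ × ℝ} (hσ : ∀ t, σ t ∈ S ×ˢ B) (hσx : ∀ t, (σ t).2 = x t) (π : ι → ℝ × ℝ → ℝ)
    (hπ : ∀ a ∈ S, ∑ t, ∑ b ∈ B, π t (a, b) * (a - b) = 0) :
    ∑ t, |(σ t).1 - bucketMean x (fun t => (σ t).1) (σ t).1| ≤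
      ∑ ab ∈ S ×ˢ B, |(#{t | σ t = ab} : ℝ) - ∑ t, π t ab| := by
  set F : ℝ → ℝ × ℝ → ℝ := fun a ab => if ab.1 = a then ab.1 - ab.2 else 0
  -- The calibration of `π` cancels its part of the bucket error, leaving the rounding error.
  have hbucket (a : ℝ) (ha : a ∈ S) : ∑ t with (σ t).1 = a, (a - x t) =
      ∑ ab ∈ S ×ˢ B, (#{t | σ t = ab} - ∑ t, π t ab) * F a ab := by
    have hπF : ∑ t, ∑ ab ∈ S ×ˢ B, π t ab * F a ab = 0 := by
      simpa [F, sum_product, mul_ite, ha] using hπ a ha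
    rw [← sum_comp_sub_sum_sum_mul hσ, hπF, sub_zero, sum_filter]
    refine sum_congr rfl fun t _ => ?_
    split_ifs with h <;> simp [F, h, hσx]
  have hF (ab : ℝ × ℝ) (hab : ab ∈ S ×ˢ B) : ∑ a ∈ S, |F a ab| ≤ 1 := by
    obtain ⟨ha, hb⟩ := mem_product.1 hab
    simp only [F, apply_ite abs, abs_zero, sum_ite_eq, ha, if_true]
    exact abs_sub_le_of_nonneg_of_le (hS _ ha).1 (hS _ ha).2 (hB _ hb).1 (hB _ hb).2
  calc ∑ t, |(σ t).1 - bucketMean x (fun t => (σ t).1) (σ t).1|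
      = ∑ a ∈ S, |∑ ab ∈ S ×ˢ B, (#{t | σ t = ab} - ∑ t, π t ab) * F a ab| := by
        rw [sum_abs_sub_bucketMean x fun t => (mem_product.1 (hσ t)).1]
        exact sum_congr rfl fun a ha => by rw [hbucket a ha]
    _ ≤ ∑ ab ∈ S ×ˢ B, |(#{t | σ t = ab} : ℝ) - ∑ t, π t ab| * ∑ a ∈ S, |F a ab| := by
        simp only [mul_sum]
        rw [sum_comm]
        gcongr with a
        exact (abs_sum_le_sum_abs _ _).trans_eq (by simp [abs_mul])
    _ ≤ ∑ ab ∈ S ×ˢ B, |(#{t | σ t = ab} : ℝ) - ∑ t, π t ab| := by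
        gcongr with ab hab
        exact mul_le_of_le_one_right (abs_nonneg _) (hF ab hab)

theorem exists_calibrated_sum_abs_sub_le {ι : Type*} [Fintype ι] [DecidableEq ι] (x p : ι → ℝ)
    (S B : Finset ℝ) (hxB : ∀ t, x t ∈ B) (hB : ∀ b ∈ B, b ∈ Set.Icc (0:ℝ) 1)
    (hS : ∀ a ∈ S, a ∈ Set.Icc (0:ℝ) 1) (D : ι → ℝ → ℝ) (hD0 : ∀ t a, 0 ≤ D t a)
    (hDsum : ∀ t, ∑ a ∈ S, D t a = 1) (hcal : ∀ a ∈ S, ∑ t, (x t - a) * D t a = 0) :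
    ∃ q : ι → ℝ, (∀ t, q t ∈ Set.Icc (0:ℝ) 1) ∧
      (∀ α : ℝ, ∑ t, (x t - q t) * (if q t = α then 1 else 0) = 0) ∧
      ∑ t, |p t - q t| ≤ (∑ t, ∑ a ∈ S, D t a * |p t - a|) + 2 * #S * #B := by
  set π : ι → ℝ × ℝ → ℝ := fun t ab => if ab.2 = x t then D t ab.1 else 0
  have sum_π_mul (t : ι) (G : ℝ × ℝ → ℝ) :
      ∑ ab ∈ S ×ˢ B, π t ab * G ab = ∑ a ∈ S, D t a * G (a, x t) := by
    simp [π, sum_product, ite_mul, hxB]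
  have hπ_cal (a : ℝ) (ha : a ∈ S) : ∑ t, ∑ b ∈ B, π t (a, b) * (a - b) = 0 := by
    rw [← neg_eq_zero, ← hcal a ha, ← sum_neg_distrib]
    refine sum_congr rfl fun t _ => ?_
    simp only [π, ite_mul, zero_mul, sum_ite_eq', hxB, if_true]
    ring
  obtain ⟨σ, hσ, hσpos, hσround, hσcost⟩ := exists_integral_rounding (S ×ˢ B) (π := π)
    (fun t ab => ite_nonneg (hD0 _ _) le_rfl) (fun t => by simpa [hDsum] using sum_π_mul t 1)
    (fun t ab => |p t - ab.1|)
  have hσx (t : ι) : (σ t).2 = x t := by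
    by_contra h
    simpa [π, h] using hσpos t
  set y : ι → ℝ := fun t => (σ t).1
  refine ⟨fun t => bucketMean x y (y t), fun t => bucketMean_mem_Icc (fun t => hB _ (hxB t)) _ _,
    sum_sub_bucketMean_mul_ite_eq_zero x y, ?_⟩
  calc ∑ t, |p t - bucketMean x y (y t)|
      ≤ ∑ t, |p t - y t| + ∑ t, |y t - bucketMean x y (y t)| := by
        rw [← sum_add_distrib]
        exact sum_le_sum fun t _ => abs_sub_le _ _ _
    _ ≤ (∑ t, ∑ a ∈ S, D t a * |p t - a|) + 2 * #(S ×ˢ B) := by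
        refine add_le_add (by simpa [sum_π_mul] using hσcost) ?_
        exact (sum_abs_sub_bucketMean_le hS hB hσ hσx π hπ_cal).trans hσround
    _ = (∑ t, ∑ a ∈ S, D t a * |p t - a|) + 2 * #S * #B := by
        rw [card_product, Nat.cast_mul, mul_assoc]

theorem sparse_rounding_general (T : ℕ) (x p : Fin T → ℝ)
    (hx : ∀ t, x t = 0 ∨ x t = 1)
    (S : Finset ℝ) (hS : ∀ a ∈ S, a ∈ Set.Icc (0:ℝ) 1)
    (D : Fin T → ℝ → ℝ)
    (hD0 : ∀ t a, 0 ≤ D t a)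
    (hDsum : ∀ t, ∑ a ∈ S, D t a = 1)
    (hcal : ∀ α : ℝ, ∑ t, (x t - α) * D t α = 0) :
    sInf {d : ℝ | ∃ q : Fin T → ℝ, (∀ t, q t ∈ Set.Icc (0:ℝ) 1) ∧
        (∀ α : ℝ, ∑ t, (x t - q t) * (if q t = α then 1 else 0) = 0) ∧
        d = ∑ t, |p t - q t|} ≤
      (∑ t, ∑ a ∈ S, D t a * |p t - a|) + 4 * S.card := by
  obtain ⟨q, hq, hq_cal, hq_cost⟩ := exists_calibrated_sum_abs_sub_le x p S {0, 1}
    (fun t => by rcases hx t with h | h <;> simp [h]) (by simp) hS D hD0 hDsum fun a _ => hcal a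
  refine csInf_le_of_le ⟨0, ?_⟩ ⟨q, hq, hq_cal, rfl⟩ ?_
  · rintro _ ⟨q', -, -, rfl⟩
    positivity
  · rw [card_pair zero_ne_one, Nat.cast_two] at hq_cost
    linarith

/-- Rounding lemma: a perfectly calibrated tuple of distributions over a common
finite set S witnesses CalDist(x,p) ≤ ‖p − D‖₁ + 4|S|. -/
theorem sparse_rounding (T : ℕ) (x p : Fin T → ℝ)
    (hx : ∀ t, x t = 0 ∨ x t = 1) (hp : ∀ t, p t ∈ Set.Icc (0:ℝ) 1)
    (S : Finset ℝ) (hS : ∀ a ∈ S, a ∈ Set.Icc (0:ℝ) 1)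
    (D : Fin T → ℝ → ℝ)
    (hD0 : ∀ t a, 0 ≤ D t a)
    (hDsupp : ∀ t a, a ∉ S → D t a = 0)
    (hDsum : ∀ t, ∑ a ∈ S, D t a = 1)
    (hcal : ∀ α : ℝ, ∑ t, (x t - α) * D t α = 0) :
    sInf {d : ℝ | ∃ q : Fin T → ℝ, (∀ t, q t ∈ Set.Icc (0:ℝ) 1) ∧
        (∀ α : ℝ, ∑ t, (x t - q t) * (if q t = α then 1 else 0) = 0) ∧
        d = ∑ t, |p t - q t|} ≤
      (∑ t, ∑ a ∈ S, D t a * |p t - a|) + 4 * S.card :=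
  sparse_rounding_general T x p hx S hS D hD0 hDsum hcal
end
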